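/- A family F ⊂ X of paths is relatively compact if and only if (i) the set {(i(f), f(i(f))) : f ∈ F} is relatively compact in ℝ × M, and (ii) for every ε > 0 and every C ≥ sup{i(f) : f ∈ F}, there exists α > 0 such that for all f ∈ F and all r₁, r₂ ∈ [i(f), C] with |r₂ − r₁| < α, one has ρ(f(r₁), f(r₂)) < ε. -/

import Mathlib

open Set Filter

/-- The space `X` of continuous paths in `M` with arbitrary starting times, represented as
pairs `(s, f)` where `f : ℝ → M` is continuous and constant on `(-∞, s]` (the canonical
extension of a path `f : [s,∞) → M`).  The (subspace of the) product topology, where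
`C(ℝ, M)` carries the compact-open topology (= uniform convergence on compact sets),
coincides with the topology of the metric `d` of the paper. -/
def PathSpace (M : Type*) [MetricSpace M] : Type _ :=
  {p : ℝ × C(ℝ, M) // ∀ t ≤ p.1, p.2 t = p.2 p.1}

instance (M : Type*) [MetricSpace M] : TopologicalSpace (PathSpace M) :=
  instTopologicalSpaceSubtype

open Topology

/-! Via `p ↦ (i(p), p)`, the path space is a closed subspace of `ℝ × C(ℝ, M)`, so `F` is
relatively compact iff its starting times are bounded and its paths are relatively compact in
`C(ℝ, M)`; by Arzelà–Ascoli the latter means equicontinuity plus pointwise relative compactness.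
A path is constant before its starting time, so its modulus of continuity is the one on
`[i(p), C]` given by (ii); and `p(t)` stays within a bounded distance of the compact set of
starting values, by chaining (ii) with `ε = 1` in steps of length `α / 2`. Conversely, a compact
family in `C(ℝ, M)` is equicontinuous by joint continuity of evaluation, hence uniformly
equicontinuous on every compact interval. -/

section Equicontinuity

variable {ι X α : Type*} [TopologicalSpace X] [UniformSpace α]

theorem IsCompact.equicontinuous_coe [LocallyCompactPair X α] {K : Set C(X, α)}
    (hK : IsCompact K) : Equicontinuous ((↑) : K → X → α) := by
  intro x₀ U hU
  obtain ⟨v, hv, hvK⟩ := hK.mem_uniformity_of_prod (f := fun x (g : C(X, α)) ↦ g x)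
    (continuous_eval.comp continuous_swap).continuousOn (mem_univ x₀) (symm_le_uniformity hU)
  filter_upwards [nhdsWithin_univ x₀ ▸ hv] with x hx g
  exact hvK x hx g g.2

theorem Equicontinuous.uniformEquicontinuousOn {β : Type*} [UniformSpace β] {F : ι → β → α}
    (h : Equicontinuous F) {S : Set β} (hS : IsCompact S) : UniformEquicontinuousOn F S := by
  rw [uniformEquicontinuousOn_iff_uniformContinuousOn]
  exact hS.uniformContinuousOn_of_continuous (equicontinuous_iff_continuous.1 h).continuousOn

theorem UniformEquicontinuousOn.exists_dist_lt {β γ : Type*} [PseudoMetricSpace β]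
    [PseudoMetricSpace γ] {F : ι → β → γ} {S : Set β} (h : UniformEquicontinuousOn F S)
    {ε : ℝ} (hε : 0 < ε) :
    ∃ δ > 0, ∀ i, ∀ x ∈ S, ∀ y ∈ S, dist x y < δ → dist (F i x) (F i y) < ε := by
  rw [(Metric.uniformity_basis_dist.inf_principal (S ×ˢ S)).uniformEquicontinuousOn_iff
    Metric.uniformity_basis_dist] at h
  obtain ⟨δ, hδ, hF⟩ := h ε hε
  exact ⟨δ, hδ, fun i x hx y hy hxy ↦ hF x y ⟨hxy, hx, hy⟩ i⟩

end Equicontinuity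

namespace ContinuousMap

variable {X α : Type*} [TopologicalSpace X] [CompactlyCoherentSpace X] [UniformSpace α]

theorem isClosedEmbedding_toUniformOnFunIsCompact :
    IsClosedEmbedding (toUniformOnFunIsCompact : C(X, α) → UniformOnFun X α {K | IsCompact K}) := by
  refine ⟨isUniformEmbedding_toUniformOnFunIsCompact.isEmbedding, ?_⟩
  rw [range_toUniformOnFunIsCompact]
  exact UniformOnFun.isClosed_setOfPred_continuous CompactlyCoherentSpace.isCoherentWith

theorem isCompact_closure_of_equicontinuous [T2Space α] {s : Set C(X, α)}
    (hs : Equicontinuous ((↑) : s → X → α))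
    (hpt : ∀ x, ∃ Q, IsCompact Q ∧ ∀ f ∈ s, f x ∈ Q) : IsCompact (closure s) :=
  ArzelaAscoli.isCompact_closure_of_isClosedEmbedding (fun _ ↦ id)
    isClosedEmbedding_toUniformOnFunIsCompact (fun K _ ↦ hs.equicontinuousOn K)
    fun _ _ x _ ↦ hpt x

end ContinuousMap

theorem dist_le_mul_of_forall_dist_lt {α : Type*} [PseudoMetricSpace α] {g : ℝ → α}
    {a b δ ε : ℝ} (hδ : 0 < δ)
    (hg : ∀ x ∈ Icc a b, ∀ y ∈ Icc a b, |y - x| < δ → dist (g x) (g y) < ε) (n : ℕ) :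
    ∀ r ∈ Icc a b, r - a ≤ n * (δ / 2) → dist (g a) (g r) ≤ n * ε := by
  induction n with
  | zero =>
    intro r hr hra
    rw [le_antisymm (by simpa using hra) hr.1]
    simp
  | succ n ih =>
    intro r hr hra
    set r' := max a (r - δ / 2)
    have hr' : r' ∈ Icc a b := ⟨le_max_left _ _, max_le (hr.1.trans hr.2) (by linarith [hr.2])⟩
    have hr'r : r' ≤ r := max_le hr.1 (by linarith)
    have hr'a : r' - a ≤ n * (δ / 2) := by
      have : (0 : ℝ) ≤ n * (δ / 2) := by positivity
      push_cast at hra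
      exact sub_le_iff_le_add.2 (max_le (by linarith) (by linarith))
    have hstep : |r - r'| < δ := by
      rw [abs_of_nonneg (sub_nonneg.2 hr'r)]; linarith [le_max_right a (r - δ / 2)]
    calc dist (g a) (g r) ≤ dist (g a) (g r') + dist (g r') (g r) := dist_triangle _ _ _
      _ ≤ n * ε + ε := add_le_add (ih r' hr' hr'a) (hg r' hr' r hr hstep).le
      _ = (n + 1 : ℕ) * ε := by push_cast; ring

namespace PathSpace

variable {M : Type*} [MetricSpace M]

def startPoint (p : PathSpace M) : ℝ × M := (p.val.1, p.val.2 p.val.1)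

def UniformlyEquicontinuousFromStart (F : Set (PathSpace M)) : Prop :=
  ∀ ε : ℝ, 0 < ε → ∀ C : ℝ, (∀ p ∈ F, p.val.1 ≤ C) →
    ∃ α : ℝ, 0 < α ∧ ∀ p ∈ F, ∀ r₁ r₂ : ℝ,
      p.val.1 ≤ r₁ → r₁ ≤ C → p.val.1 ≤ r₂ → r₂ ≤ C → |r₂ - r₁| < α →
        dist (p.val.2 r₁) (p.val.2 r₂) < ε

theorem apply_eq_apply_max (p : PathSpace M) (t : ℝ) : p.val.2 t = p.val.2 (max t p.val.1) := by
  rcases le_total p.val.1 t with h | h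
  · rw [max_eq_left h]
  · rw [max_eq_right h, p.2 t h]

theorem isClosed_setOf_const_le :
    IsClosed {q : ℝ × C(ℝ, M) | ∀ t ≤ q.1, q.2 t = q.2 q.1} := by
  have h : {q : ℝ × C(ℝ, M) | ∀ t ≤ q.1, q.2 t = q.2 q.1} =
      ⋂ t : ℝ, {q | q.2 (min t q.1) = q.2 q.1} := by
    ext q
    simp only [mem_ofPred_eq, mem_iInter]
    refine ⟨fun h t ↦ h _ (min_le_right _ _), fun h t ht ↦ ?_⟩
    simpa only [min_eq_left ht] using h t
  rw [h]
  exact isClosed_iInter fun t ↦ isClosed_eq (by fun_prop) (by fun_prop)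

theorem isClosedEmbedding_val : IsClosedEmbedding (Subtype.val : PathSpace M → ℝ × C(ℝ, M)) :=
  isClosed_setOf_const_le.isClosedEmbedding_subtypeVal

theorem continuous_startPoint : Continuous (startPoint : PathSpace M → ℝ × M) := by
  unfold startPoint; fun_prop

theorem uniformlyEquicontinuousFromStart_of_isCompact_closure {F : Set (PathSpace M)}
    (hF : IsCompact (closure F)) : UniformlyEquicontinuousFromStart F := by
  intro ε hε C _
  obtain ⟨a, ha⟩ := (hF.image (continuous_fst.comp continuous_subtype_val)).bddBelow
  have hpaths : IsCompact ((fun p : PathSpace M ↦ p.val.2) '' closure F) :=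
    hF.image (continuous_snd.comp continuous_subtype_val)
  obtain ⟨α, hα, hmod⟩ :=
    (hpaths.equicontinuous_coe.uniformEquicontinuousOn (isCompact_Icc (a := a) (b := C)))
      |>.exists_dist_lt hε
  refine ⟨α, hα, fun p hp r₁ r₂ h₁ h₁C h₂ h₂C h₁₂ ↦ ?_⟩
  have hpa : a ≤ p.val.1 := ha ⟨p, subset_closure hp, rfl⟩
  exact hmod ⟨p.val.2, p, subset_closure hp, rfl⟩ r₁ ⟨hpa.trans h₁, h₁C⟩ r₂ ⟨hpa.trans h₂, h₂C⟩
    (by rwa [Real.dist_eq, abs_sub_comm])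

theorem equicontinuous_of_uniformlyEquicontinuousFromStart {F : Set (PathSpace M)}
    (hF : UniformlyEquicontinuousFromStart F) {b : ℝ} (hb : ∀ p ∈ F, p.val.1 ≤ b) :
    Equicontinuous ((↑) : ((fun p : PathSpace M ↦ p.val.2) '' F) → ℝ → M) := by
  intro t₀
  rw [Metric.equicontinuousAt_iff]
  intro ε hε
  obtain ⟨α, hα, hmod⟩ := hF ε hε (max (t₀ + 1) b) fun p hp ↦ le_max_of_le_right (hb p hp)
  refine ⟨min α 1, lt_min hα one_pos, ?_⟩
  rintro x hx ⟨_, p, hp, rfl⟩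
  rw [Real.dist_eq] at hx
  have hxα : |x - t₀| < α := hx.trans_le (min_le_left _ _)
  have hx₁ : x ≤ t₀ + 1 := by linarith [(abs_lt.1 hx).2, min_le_right α 1]
  show dist (p.val.2 t₀) (p.val.2 x) < ε
  rw [apply_eq_apply_max p t₀, apply_eq_apply_max p x]
  exact hmod p hp _ _ (le_max_right _ _) (max_le_max (by linarith) (hb p hp)) (le_max_right _ _)
    (max_le_max hx₁ (hb p hp)) ((abs_max_sub_max_le_abs _ _ _).trans_lt hxα)

theorem exists_isCompact_forall_apply_mem [ProperSpace M] {F : Set (PathSpace M)}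
    (hF : UniformlyEquicontinuousFromStart F) {K : Set M} (hK : IsCompact K)
    (hFK : ∀ p ∈ F, p.val.2 p.val.1 ∈ K) {a b : ℝ} (hab : ∀ p ∈ F, p.val.1 ∈ Icc a b) (t : ℝ) :
    ∃ Q, IsCompact Q ∧ ∀ f ∈ (fun p : PathSpace M ↦ p.val.2) '' F, f t ∈ Q := by
  obtain ⟨δ, hδ, hmod⟩ := hF 1 one_pos (max t b) fun p hp ↦ le_max_of_le_right (hab p hp).2
  obtain ⟨n, hn⟩ := exists_nat_ge ((max t b - a) / (δ / 2))
  refine ⟨Metric.cthickening n K, hK.cthickening, ?_⟩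
  rintro _ ⟨p, hp, rfl⟩
  have hspan : max t p.val.1 - p.val.1 ≤ n * (δ / 2) := by
    have := (div_le_iff₀ (by positivity)).1 hn
    linarith [max_le_max_left t (hab p hp).2, (hab p hp).1]
  have hdist := dist_le_mul_of_forall_dist_lt hδ
    (fun x hx y hy hxy ↦ hmod p hp x y hx.1 hx.2 hy.1 hy.2 hxy) n (max t p.val.1)
    ⟨le_max_right _ _, max_le_max_left t (hab p hp).2⟩ hspan
  rw [apply_eq_apply_max p t]
  exact Metric.mem_cthickening_of_dist_le _ _ _ _ (hFK p hp) (by rw [dist_comm]; simpa using hdist)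

theorem isCompact_closure_of_uniformlyEquicontinuousFromStart [ProperSpace M]
    {F : Set (PathSpace M)} (hstart : IsCompact (closure (startPoint '' F)))
    (hF : UniformlyEquicontinuousFromStart F) : IsCompact (closure F) := by
  have hmem : ∀ p ∈ F, startPoint p ∈ closure (startPoint '' F) :=
    fun p hp ↦ subset_closure (mem_image_of_mem _ hp)
  have htimes := hstart.image continuous_fst
  obtain ⟨a, ha⟩ := htimes.bddBelow
  obtain ⟨b, hb⟩ := htimes.bddAbove
  have hab : ∀ p ∈ F, p.val.1 ∈ Icc a b := fun p hp ↦
    ⟨ha (mem_image_of_mem _ (hmem p hp)), hb (mem_image_of_mem _ (hmem p hp))⟩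
  have hpaths : IsCompact (closure ((fun p : PathSpace M ↦ p.val.2) '' F)) :=
    ContinuousMap.isCompact_closure_of_equicontinuous
      (equicontinuous_of_uniformlyEquicontinuousFromStart hF fun p hp ↦ (hab p hp).2)
      (exists_isCompact_forall_apply_mem hF (hstart.image continuous_snd)
        (fun p hp ↦ mem_image_of_mem _ (hmem p hp)) hab)
  have hbox := isClosedEmbedding_val.isCompact_preimage (htimes.prod hpaths)
  refine hbox.of_isClosed_subset isClosed_closure (closure_minimal ?_ hbox.isClosed)
  exact fun p hp ↦ ⟨mem_image_of_mem _ (hmem p hp), subset_closure (mem_image_of_mem _ hp)⟩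

end PathSpace

theorem pathSpace_relatively_compact_iff
    {M : Type*} [MetricSpace M] [ProperSpace M]
    (F : Set (PathSpace M)) :
    IsCompact (closure F) ↔
      (IsCompact (closure ((fun p : PathSpace M => (p.val.1, p.val.2 p.val.1)) '' F)) ∧
       ∀ ε : ℝ, 0 < ε → ∀ C : ℝ, (∀ p ∈ F, p.val.1 ≤ C) →
         ∃ α : ℝ, 0 < α ∧ ∀ p ∈ F, ∀ r₁ r₂ : ℝ,
           p.val.1 ≤ r₁ → r₁ ≤ C → p.val.1 ≤ r₂ → r₂ ≤ C → |r₂ - r₁| < α →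
             dist (p.val.2 r₁) (p.val.2 r₂) < ε) := by
  refine ⟨fun hF ↦ ⟨?_, PathSpace.uniformlyEquicontinuousFromStart_of_isCompact_closure hF⟩,
    fun h ↦ PathSpace.isCompact_closure_of_uniformlyEquicontinuousFromStart h.1 h.2⟩
  show IsCompact (closure (PathSpace.startPoint '' F))
  rw [← image_closure_of_isCompact hF PathSpace.continuous_startPoint.continuousOn]
  exact hF.image PathSpace.continuous_startPoint
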